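/- arXiv:2409.15056 — 2 statements merged into one kernel-verified Lean document; each statement's English description precedes it below -/
import Mathlib

section
/- If $N_1$ and $N_2$ are two cyclic submodules of $\Omega^2$ (with $\Omega = \mathbb{F}_p[[T]]$) such that $N_1 \cap N_2 \neq 0$, then there exist nonnegative integers $a, b$ with $T^a N_1 = T^b N_2$. -/
/-- `Ω = 𝔽_p[[T]]`, the ring of formal power series over `𝔽_p`. -/
abbrev Omega (p : ℕ) : Type := PowerSeries (ZMod p)

/-!
A nonzero element `z` of `Ω x ∩ Ω y` is `z = r • x = s • y` with `r, s ≠ 0`. In a discrete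
valuation ring `r = u T^a` and `s = v T^b` with units `u, v`, so `T^a x` and `T^b y` both
generate the same cyclic module as `z`.
-/

namespace Submodule

variable {R M : Type*} [CommRing R] [AddCommGroup M] [Module R M]

theorem map_smul_id_span_singleton (c : R) (w : M) :
    map (c • LinearMap.id) (span R {w}) = span R {c • w} := by
  rw [map_span, Set.image_singleton]
  rfl

theorem exists_span_singleton_smul_eq_pow [IsDomain R] [IsDiscreteValuationRing R] {ϖ : R}
    (hϖ : Irreducible ϖ) {r : R} (hr : r ≠ 0) (x : M) :
    ∃ a : ℕ, span R {r • x} = span R {ϖ ^ a • x} := by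
  obtain ⟨a, u, rfl⟩ := IsDiscreteValuationRing.eq_unit_mul_pow_irreducible hr hϖ
  exact ⟨a, by rw [mul_smul, span_singleton_smul_eq u.isUnit]⟩

theorem exists_span_singleton_pow_smul_eq_of_inf_ne_bot [IsDomain R]
    [IsDiscreteValuationRing R] {ϖ : R} (hϖ : Irreducible ϖ) {x y : M}
    (h : span R {x} ⊓ span R {y} ≠ ⊥) :
    ∃ a b : ℕ, span R {ϖ ^ a • x} = span R {ϖ ^ b • y} := by
  obtain ⟨z, ⟨hzx, hzy⟩, hz0⟩ := exists_mem_ne_zero_of_ne_bot h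
  obtain ⟨r, rfl⟩ := mem_span_singleton.mp hzx
  obtain ⟨s, hs⟩ := mem_span_singleton.mp hzy
  have hr : r ≠ 0 := by rintro rfl; exact hz0 (zero_smul R x)
  have hs0 : s ≠ 0 := by rintro rfl; exact hz0 (by rw [← hs, zero_smul])
  obtain ⟨a, ha⟩ := exists_span_singleton_smul_eq_pow hϖ hr x
  obtain ⟨b, hb⟩ := exists_span_singleton_smul_eq_pow hϖ hs0 y
  exact ⟨a, b, by rw [← ha, ← hb, hs]⟩

end Submodule

theorem cyclic_inter_ne_bot_exists_shift (p : ℕ) (hp : p.Prime)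
    (N₁ N₂ : Submodule (Omega p) (Omega p × Omega p))
    (h₁ : ∃ x, N₁ = Submodule.span (Omega p) {x})
    (h₂ : ∃ x, N₂ = Submodule.span (Omega p) {x})
    (h : N₁ ⊓ N₂ ≠ ⊥) :
    ∃ a b : ℕ,
      Submodule.map (((PowerSeries.X : Omega p) ^ a) • (LinearMap.id (M := Omega p × Omega p))) N₁
        = Submodule.map (((PowerSeries.X : Omega p) ^ b) • (LinearMap.id (M := Omega p × Omega p))) N₂ := by
  have := Fact.mk hp
  obtain ⟨x, rfl⟩ := h₁
  obtain ⟨y, rfl⟩ := h₂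
  simp only [Submodule.map_smul_id_span_singleton]
  exact Submodule.exists_span_singleton_pow_smul_eq_of_inf_ne_bot PowerSeries.X_irreducible h
end

section
/- For the uniform distribution on pairs of maximal cyclic submodules of $(\mathbb{F}_p[T]/(T^n))^2$, the probability that the two submodules are distinct is $1 - \frac{1}{(p+1)p^{n-1}}$, which is at least $1 - \frac{1}{p+1}$. -/
open Polynomial

/-- `Ωₙ = 𝔽_p[T]/(Tⁿ)`. -/
abbrev Omegan (p n : ℕ) : Type :=
  Polynomial (ZMod p) ⧸ Ideal.span {(X : Polynomial (ZMod p)) ^ n}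

/-- The image of `T` in `𝔽_p[T]/(Tⁿ)`. -/
noncomputable def Tn (p n : ℕ) : Omegan p n :=
  Ideal.Quotient.mk _ X

/-- The submodule `T · Ωₙ²` of `Ωₙ²`. -/
noncomputable def TOmegan2 (p n : ℕ) : Submodule (Omegan p n) (Omegan p n × Omegan p n) :=
  Submodule.prod (Ideal.span {Tn p n}) (Ideal.span {Tn p n})

/-- A cyclic submodule of `Ωₙ²` is maximal if it is not contained in `T · Ωₙ²`. -/
def IsMaximalCyclic (p n : ℕ) (N : Submodule (Omegan p n) (Omegan p n × Omegan p n)) : Prop :=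
  (∃ x, N = Submodule.span (Omegan p n) {x}) ∧ ¬ N ≤ TOmegan2 p n

/-!
A maximal cyclic submodule of `Ω²`, `Ω = 𝔽_p[T]/(Tⁿ)`, is spanned by a vector outside `𝔪 × 𝔪`,
where `𝔪 = (T)` is the maximal ideal of the local ring `Ω`; so one coordinate of the generator is a
unit, and rescaling it to `1` yields a unique generator `(1, b)` with `b ∈ Ω` or `(a, 1)` with
`a ∈ 𝔪`. Hence there are `M = |Ω| + |𝔪| = pⁿ + pⁿ⁻¹ = (p + 1) pⁿ⁻¹` of them, and two of `M`
equally likely objects drawn independently coincide with probability `1 / M`.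
-/

open IsLocalRing Submodule

theorem natCard_ne_div_natCard_prod {S : Type*} [Finite S] [Nonempty S] :
    (Nat.card {x : S × S // x.1 ≠ x.2} : ℝ) / Nat.card (S × S) = 1 - 1 / Nat.card S := by
  have hdiag : Nat.card {x : S × S // x.1 = x.2} = Nat.card S :=
    Nat.card_congr ⟨fun x ↦ x.1.1, fun s ↦ ⟨(s, s), rfl⟩, fun ⟨_, h⟩ ↦ by ext <;> simp [h],
      fun _ ↦ rfl⟩
  have hsplit :
      (Nat.card S : ℝ) + Nat.card {x : S × S // x.1 ≠ x.2} = Nat.card S * Nat.card S := by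
    classical
    have := Nat.card_congr (Equiv.sumCompl fun x : S × S ↦ x.1 = x.2)
    rw [Nat.card_sum, hdiag, Nat.card_prod] at this
    exact_mod_cast this
  have hS : (Nat.card S : ℝ) ≠ 0 := by exact_mod_cast Nat.card_pos.ne'
  rw [Nat.card_prod, Nat.cast_mul, eq_sub_of_add_eq' hsplit]
  field_simp

section Lines

theorem mem_span_singleton_one_fst_iff {R : Type*} [Semiring R] {b x y : R} :
    (x, y) ∈ R ∙ (1, b) ↔ y = x * b := by
  simp only [mem_span_singleton, Prod.smul_mk, smul_eq_mul, mul_one, Prod.mk.injEq]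
  constructor
  · rintro ⟨c, rfl, rfl⟩; rfl
  · rintro rfl; exact ⟨x, rfl, rfl⟩

theorem mem_span_singleton_one_snd_iff {R : Type*} [Semiring R] {a x y : R} :
    (x, y) ∈ R ∙ (a, 1) ↔ x = y * a := by
  simp only [mem_span_singleton, Prod.smul_mk, smul_eq_mul, mul_one, Prod.mk.injEq]
  constructor
  · rintro ⟨c, rfl, rfl⟩; rfl
  · rintro rfl; exact ⟨y, rfl, rfl⟩

variable (R : Type*) [CommRing R] [IsLocalRing R]

def IsUnimodularLine (N : Submodule R (R × R)) : Prop :=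
  ∃ v ∉ Submodule.prod (maximalIdeal R) (maximalIdeal R), N = R ∙ v

/-- The points `[1 : b]` of the affine chart of `ℙ¹(R)` and the points `[a : 1]`, `a ∈ 𝔪`,
at infinity. -/
def chartVec : R ⊕ maximalIdeal R → R × R
  | .inl b => (1, b)
  | .inr a => (a, 1)

variable {R}

theorem chartVec_notMem (x : R ⊕ maximalIdeal R) :
    chartVec R x ∉ Submodule.prod (maximalIdeal R) (maximalIdeal R) := by
  rcases x with b | a
  · exact fun h ↦ (maximalIdeal R).one_notMem h.1
  · exact fun h ↦ (maximalIdeal R).one_notMem h.2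

theorem span_chartVec_injective : Function.Injective fun x ↦ R ∙ chartVec R x := by
  intro x y (h : R ∙ chartVec R x = R ∙ chartVec R y)
  have hy : chartVec R y ∈ R ∙ chartVec R x := h ▸ mem_span_singleton_self _
  rcases x with b | a <;> rcases y with b' | a' <;>
    simp only [chartVec, mem_span_singleton_one_fst_iff, mem_span_singleton_one_snd_iff,
      one_mul] at hy
  · rw [hy]
  · exact ((maximalIdeal R).one_notMem (hy ▸ Ideal.mul_mem_right _ _ a'.2)).elim
  · exact ((maximalIdeal R).one_notMem (hy ▸ Ideal.mul_mem_left _ _ a.2)).elim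
  · rw [Subtype.ext hy]

theorem exists_span_chartVec_eq {v : R × R}
    (hv : v ∉ Submodule.prod (maximalIdeal R) (maximalIdeal R)) :
    ∃ x, R ∙ chartVec R x = R ∙ v := by
  obtain ⟨a, b⟩ := v
  by_cases ha : IsUnit a
  · obtain ⟨u, rfl⟩ := ha
    refine ⟨.inl (u⁻¹ * b : R), ?_⟩
    rw [← span_singleton_group_smul_eq R u⁻¹ ((u : R), b)]
    simp [chartVec, Units.smul_def]
  · have ha : a ∈ maximalIdeal R := ha
    obtain ⟨u, rfl⟩ : IsUnit b := notMem_maximalIdeal.1 fun hb ↦ hv ⟨ha, hb⟩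
    refine ⟨.inr ⟨u⁻¹ * a, Ideal.mul_mem_left _ _ ha⟩, ?_⟩
    rw [← span_singleton_group_smul_eq R u⁻¹ (a, (u : R))]
    simp [chartVec, Units.smul_def]

variable (R) in
noncomputable def equivUnimodularLine :
    R ⊕ maximalIdeal R ≃ {N : Submodule R (R × R) // IsUnimodularLine R N} :=
  Equiv.ofBijective (fun x ↦ ⟨R ∙ chartVec R x, chartVec R x, chartVec_notMem x, rfl⟩)
    ⟨fun _ _ h ↦ span_chartVec_injective (congrArg Subtype.val h),
      fun ⟨_, _, hv, hN⟩ ↦ (exists_span_chartVec_eq hv).imp fun _ h ↦ Subtype.ext (h.trans hN.symm)⟩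

theorem isUnimodularLine_iff {N : Submodule R (R × R)} :
    IsUnimodularLine R N ↔
      (∃ v, N = R ∙ v) ∧ ¬N ≤ Submodule.prod (maximalIdeal R) (maximalIdeal R) := by
  constructor
  · rintro ⟨v, hv, rfl⟩
    exact ⟨⟨v, rfl⟩, by rwa [span_singleton_le_iff_mem]⟩
  · rintro ⟨⟨v, rfl⟩, hv⟩
    exact ⟨v, by rwa [span_singleton_le_iff_mem] at hv, rfl⟩

theorem natCard_isUnimodularLine [Finite R] :
    Nat.card {N : Submodule R (R × R) // IsUnimodularLine R N} =
      (Nat.card (ResidueField R) + 1) * Nat.card (maximalIdeal R) := by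
  rw [← Nat.card_congr (equivUnimodularLine R), Nat.card_sum,
    card_eq_card_quotient_mul_card (maximalIdeal R), ← ResidueField]
  ring

end Lines

section NilKernel

variable {R K : Type*} [CommRing R] [Field K] (f : R →+* K) (hf : Function.Surjective f)
  (hnil : ∀ x ∈ RingHom.ker f, IsNilpotent x)
include hf hnil

theorem isUnit_iff_ne_zero_of_ker_nil {a : R} : IsUnit a ↔ f a ≠ 0 := by
  refine ⟨fun ha ↦ (ha.map f).ne_zero, fun ha ↦ ?_⟩
  obtain ⟨b, hb⟩ := hf (f a)⁻¹
  have hab : a * b - 1 ∈ RingHom.ker f := by simp [RingHom.mem_ker, hb, ha]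
  exact isUnit_of_mul_isUnit_left (sub_add_cancel (a * b) 1 ▸ (hnil _ hab).isUnit_add_one)

theorem isLocalRing_of_ker_nil : IsLocalRing R :=
  have := f.domain_nontrivial
  .of_isUnit_or_isUnit_one_sub_self fun a ↦ by
    simp only [isUnit_iff_ne_zero_of_ker_nil f hf hnil, map_sub, map_one]
    by_cases h : f a = 0 <;> simp [h]

theorem maximalIdeal_eq_ker_of_ker_nil [IsLocalRing R] : maximalIdeal R = RingHom.ker f := by
  ext a
  rw [mem_maximalIdeal, mem_nonunits_iff, isUnit_iff_ne_zero_of_ker_nil f hf hnil,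
    RingHom.mem_ker, not_not]

theorem natCard_residueField_of_ker_nil [IsLocalRing R] :
    Nat.card (ResidueField R) = Nat.card K :=
  Nat.card_congr ((Ideal.quotEquivOfEq (maximalIdeal_eq_ker_of_ker_nil f hf hnil)).trans
    (RingHom.quotientKerEquivOfSurjective hf)).toEquiv

end NilKernel

section Truncated

variable (K : Type*) [Field K] (n : ℕ)

instance [Finite K] : Finite (K[X] ⧸ Ideal.span {(X : K[X]) ^ n}) :=
  .of_equiv _ (AdjoinRoot.powerBasis' (monic_X_pow n)).basis.equivFun.toEquiv.symm

theorem natCard_quotient_span_X_pow :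
    Nat.card (K[X] ⧸ Ideal.span {(X : K[X]) ^ n}) = Nat.card K ^ n := by
  refine (Nat.card_congr (AdjoinRoot.powerBasis' (monic_X_pow n)).basis.equivFun.toEquiv).trans ?_
  rw [Nat.card_fun, Nat.card_eq_fintype_card (α := Fin _), Fintype.card_fin,
    AdjoinRoot.powerBasis'_dim, natDegree_X_pow]

variable [NeZero n]

noncomputable def truncConstCoeff : K[X] ⧸ Ideal.span {(X : K[X]) ^ n} →+* K :=
  Ideal.Quotient.lift _ (evalRingHom 0) fun g hg ↦ by
    obtain ⟨c, rfl⟩ := Ideal.mem_span_singleton'.1 hg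
    simp [NeZero.ne n]

theorem truncConstCoeff_surjective : Function.Surjective (truncConstCoeff K n) :=
  fun c ↦ ⟨Ideal.Quotient.mk _ (C c), by simp [truncConstCoeff]⟩

theorem ker_truncConstCoeff :
    RingHom.ker (truncConstCoeff K n) = Ideal.span {Ideal.Quotient.mk _ X} := by
  refine (Ideal.ker_quotient_lift _ _).trans ?_
  rw [ker_evalRingHom, Ideal.map_span, Set.image_singleton, map_zero, sub_zero]

theorem isNilpotent_of_mem_ker_truncConstCoeff :
    ∀ x ∈ RingHom.ker (truncConstCoeff K n), IsNilpotent x := by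
  intro x hx
  rw [ker_truncConstCoeff] at hx
  obtain ⟨c, rfl⟩ := Ideal.mem_span_singleton'.1 hx
  refine ⟨n, ?_⟩
  rw [mul_pow, ← map_pow, Ideal.Quotient.eq_zero_iff_mem.2 (Ideal.mem_span_singleton_self _),
    mul_zero]

instance : IsLocalRing (K[X] ⧸ Ideal.span {(X : K[X]) ^ n}) :=
  isLocalRing_of_ker_nil _ (truncConstCoeff_surjective K n)
    (isNilpotent_of_mem_ker_truncConstCoeff K n)

theorem maximalIdeal_quotient_span_X_pow :
    maximalIdeal (K[X] ⧸ Ideal.span {(X : K[X]) ^ n}) = Ideal.span {Ideal.Quotient.mk _ X} := by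
  rw [maximalIdeal_eq_ker_of_ker_nil _ (truncConstCoeff_surjective K n)
    (isNilpotent_of_mem_ker_truncConstCoeff K n), ker_truncConstCoeff]

theorem natCard_residueField_quotient_span_X_pow :
    Nat.card (ResidueField (K[X] ⧸ Ideal.span {(X : K[X]) ^ n})) = Nat.card K :=
  natCard_residueField_of_ker_nil _ (truncConstCoeff_surjective K n)
    (isNilpotent_of_mem_ker_truncConstCoeff K n)

theorem natCard_maximalIdeal_quotient_span_X_pow [Finite K] :
    Nat.card (maximalIdeal (K[X] ⧸ Ideal.span {(X : K[X]) ^ n})) = Nat.card K ^ (n - 1) := by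
  have h := card_eq_card_quotient_mul_card (maximalIdeal (K[X] ⧸ Ideal.span {(X : K[X]) ^ n}))
  rw [natCard_quotient_span_X_pow, ← ResidueField, natCard_residueField_quotient_span_X_pow,
    ← pow_sub_one_mul (NeZero.ne n)] at h
  exact (Nat.eq_of_mul_eq_mul_right Nat.card_pos h).symm

end Truncated

theorem isMaximalCyclic_iff {p n : ℕ} [Fact p.Prime] [NeZero n]
    {N : Submodule (Omegan p n) (Omegan p n × Omegan p n)} :
    IsMaximalCyclic p n N ↔ IsUnimodularLine (Omegan p n) N := by
  rw [isUnimodularLine_iff, maximalIdeal_quotient_span_X_pow]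
  rfl

theorem prob_distinct_eq (p n : ℕ) (hp : p.Prime) (hn : 1 ≤ n) :
    (Nat.card {x : {N : Submodule (Omegan p n) (Omegan p n × Omegan p n) // IsMaximalCyclic p n N} ×
                   {N : Submodule (Omegan p n) (Omegan p n × Omegan p n) // IsMaximalCyclic p n N} //
                x.1 ≠ x.2} : ℝ) /
      (Nat.card ({N : Submodule (Omegan p n) (Omegan p n × Omegan p n) // IsMaximalCyclic p n N} ×
                 {N : Submodule (Omegan p n) (Omegan p n × Omegan p n) // IsMaximalCyclic p n N}) : ℝ)
      = 1 - 1 / (((p : ℝ) + 1) * (p : ℝ) ^ (n - 1))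
    ∧ 1 - 1 / (((p : ℝ) + 1) * (p : ℝ) ^ (n - 1)) ≥ 1 - 1 / ((p : ℝ) + 1) := by
  have := Fact.mk hp
  have : NeZero n := ⟨by omega⟩
  have hcard : Nat.card {N // IsMaximalCyclic p n N} = (p + 1) * p ^ (n - 1) := by
    rw [Nat.card_congr (Equiv.subtypeEquivRight fun _ ↦ isMaximalCyclic_iff),
      natCard_isUnimodularLine, natCard_residueField_quotient_span_X_pow,
      natCard_maximalIdeal_quotient_span_X_pow, Nat.card_zmod]
  obtain ⟨_, _⟩ := Nat.card_pos_iff.1 (hcard ▸ Nat.mul_pos p.succ_pos (pow_pos hp.pos _))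
  constructor
  · rw [natCard_ne_div_natCard_prod, hcard]
    push_cast
    rfl
  · have hp1 : (1 : ℝ) ≤ p := by exact_mod_cast hp.one_lt.le
    gcongr
    exact le_mul_of_one_le_right (by positivity) (one_le_pow₀ hp1)
end
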